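/- Let V be a finite-dimensional vector space over K = GF(2) and f : V → V a nilpotent K-linear endomorphism. Suppose V = ⟨u⟩ ⊕ ⟨v⟩ with e(u) = R, e(v) = S, and R + 1 < S. Then an f-invariant subspace X ⊆ V is characteristic and not hyperinvariant if and only if X = ⟨f^{R−s}(u) + f^{S−q}(v)⟩^c for some integers s, q satisfying 0 < s ≤ R, s < q, and R − s < S − q. -/

import Mathlib

open Module LinearMap

section Defs

variable {K V : Type*} [Field K] [AddCommGroup V] [Module K V]

/-- `α` commutes with `f`. -/
def Commutes (f : V →ₗ[K] V) (α : V ≃ₗ[K] V) : Prop :=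
  ∀ v, α (f v) = f (α v)

/-- `X` is hyperinvariant: invariant under every endomorphism commuting with `f`. -/
def Hyperinv (f : V →ₗ[K] V) (X : Submodule K V) : Prop :=
  ∀ g : V →ₗ[K] V, (∀ v, g (f v) = f (g v)) → ∀ x ∈ X, g x ∈ X

/-- `X` is characteristic: `f`-invariant and invariant under every automorphism
commuting with `f`. -/
def Charinv (f : V →ₗ[K] V) (X : Submodule K V) : Prop :=
  (∀ x ∈ X, f x ∈ X) ∧ ∀ α : V ≃ₗ[K] V, Commutes f α → ∀ x ∈ X, α x ∈ X

/-- The characteristic hull of a set `B`: the subspace spanned by all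
`f^i (α b)`, `b ∈ B`, `α` an automorphism commuting with `f`. -/
def charHull (f : V →ₗ[K] V) (B : Set V) : Submodule K V :=
  Submodule.span K
    {y | ∃ b ∈ B, ∃ i : ℕ, ∃ α : V ≃ₗ[K] V, Commutes f α ∧ y = (f ^ i) (α b)}

/-- The `f`-cyclic subspace generated by `x`. -/
def cyc (f : V →ₗ[K] V) (x : V) : Submodule K V :=
  Submodule.span K (Set.range fun i : ℕ => (f ^ i) x)

/-- The `f`-invariant span of a set `B`. -/
def invSpan (f : V →ₗ[K] V) (B : Set V) : Submodule K V :=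
  Submodule.span K {y | ∃ b ∈ B, ∃ i : ℕ, y = (f ^ i) b}

/-- The exponent of `x`: the least `ℓ` with `f^ℓ x = 0`. -/
noncomputable def expnt (f : V →ₗ[K] V) (x : V) : ℕ :=
  sInf {ℓ : ℕ | (f ^ ℓ) x = 0}

/-- The height of `x`: the largest `q` with `x ∈ f^q V`. -/
noncomputable def hgt (f : V →ₗ[K] V) (x : V) : ℕ :=
  sSup {q : ℕ | x ∈ LinearMap.range (f ^ q)}

/-- `u` is a generator of `V`: `V = ⟨u⟩ ⊕ V₂` for some `f`-invariant `V₂`. -/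
def IsGenerator (f : V →ₗ[K] V) (u : V) : Prop :=
  u ≠ 0 ∧ ∃ V₂ : Submodule K V, (∀ x ∈ V₂, f x ∈ V₂) ∧ IsCompl (cyc f u) V₂

/-- `(u 0, …, u (m-1))` is a generator tuple of `V`:
`V = ⟨u 0⟩ ⊕ ⋯ ⊕ ⟨u (m-1)⟩` with nondecreasing exponents. -/
def IsGenTuple {m : ℕ} (f : V →ₗ[K] V) (u : Fin m → V) : Prop :=
  DirectSum.IsInternal (fun i => cyc f (u i)) ∧ Monotone fun i => expnt f (u i)

/-- The Ulm invariant `d(f,r) = dim ((ker f ⊓ f^{r-1} V) / (ker f ⊓ f^r V))`. -/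
noncomputable def ulm (f : V →ₗ[K] V) (r : ℕ) : ℕ :=
  Module.finrank K
    (↥(LinearMap.ker f ⊓ LinearMap.range (f ^ (r - 1))) ⧸
      Submodule.comap (LinearMap.ker f ⊓ LinearMap.range (f ^ (r - 1))).subtype
        (LinearMap.ker f ⊓ LinearMap.range (f ^ r)))

/-- The largest hyperinvariant subspace contained in `X`
(the sum of all hyperinvariant subspaces contained in `X`). -/
noncomputable def largestHyperinv (f : V →ₗ[K] V) (X : Submodule K V) : Submodule K V :=
  sSup {W : Submodule K V | Hyperinv f W ∧ W ≤ X}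

end Defs

/-!
Over `GF(2)` every vector of `V = ⟨u⟩ ⊕ ⟨v⟩` can be written `f^a (u + z₁) + f^b (v + z₂)` with
`z₁ ∈ ⟨f u⟩`, `z₂ ∈ ⟨f v⟩`, and the automorphisms commuting with `f` are exactly the maps
`u ↦ u + z₁`, `v ↦ v + z₂` with `z₁ ∈ ⟨f u⟩ + ⟨f^(S-R) v⟩` and `z₂ ∈ ⟨u⟩ + ⟨f v⟩`. Hence every
vector is the image under such an automorphism of some `y = f^a u + f^b v`, and the
characteristic hull of `y` contains `⟨f^min(a+1,b) u⟩ + ⟨f^min(S-R+a,b+1) v⟩`. When `a < b`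
and `b + R < a + S` the hull is exactly `K y + ⟨f^(a+1) u⟩ + ⟨f^(b+1) v⟩`, which misses the image
`f^b v` of `y` under the projection onto `⟨v⟩`, so it is not hyperinvariant.

Conversely, for a characteristic `X` let `a` and `b` be the least exponents occurring in pairs
with `f^a u + f^b v ∈ X`, so that `X ⊆ ⟨f^a u⟩ + ⟨f^b v⟩`. If `f^a u ∈ X` then also `f^b v ∈ X`,
`X = ⟨f^a u⟩ + ⟨f^b v⟩`, and the hull inclusions above make it hyperinvariant. Otherwise neither
`f^a u` nor `f^b v` lies in `X`, both minima are attained by one pair, and `X` is the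
characteristic hull of `f^a u + f^b v`.
-/

open Submodule

section Cyclic

variable {K V : Type*} [Field K] [AddCommGroup V] [Module K V] {f : V →ₗ[K] V}

theorem pow_apply_pow_apply (f : V →ₗ[K] V) (i j : ℕ) (x : V) :
    (f ^ i) ((f ^ j) x) = (f ^ (i + j)) x := by
  rw [pow_add, Module.End.mul_apply]

theorem pow_apply_apply (f : V →ₗ[K] V) (k : ℕ) (x : V) : (f ^ k) (f x) = (f ^ (k + 1)) x := by
  rw [pow_succ, Module.End.mul_apply]

theorem apply_pow_apply (f : V →ₗ[K] V) (k : ℕ) (x : V) : f ((f ^ k) x) = (f ^ (k + 1)) x := by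
  rw [pow_succ', Module.End.mul_apply]

theorem pow_apply_mem_cyc (f : V →ₗ[K] V) (x : V) (i : ℕ) : (f ^ i) x ∈ cyc f x :=
  subset_span ⟨i, rfl⟩

theorem mem_cyc_self (f : V →ₗ[K] V) (x : V) : x ∈ cyc f x := by
  simpa using pow_apply_mem_cyc f x 0

theorem cyc_le_iff {x : V} {M : Submodule K V} : cyc f x ≤ M ↔ ∀ i : ℕ, (f ^ i) x ∈ M := by
  rw [cyc, span_le, Set.range_subset_iff]
  rfl

theorem cyc_le {x : V} {M : Submodule K V} (hM : ∀ y ∈ M, f y ∈ M) (hx : x ∈ M) :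
    cyc f x ≤ M :=
  cyc_le_iff.2 fun i => Module.End.pow_apply_mem_of_forall_mem i hM x hx

theorem cyc_pow_apply (f : V →ₗ[K] V) (x : V) (k : ℕ) :
    cyc f ((f ^ k) x) = (cyc f x).map (f ^ k) := by
  rw [cyc, cyc, Submodule.map_span, ← Set.range_comp]
  congr 2
  funext i
  rw [Function.comp_apply, pow_apply_pow_apply, pow_apply_pow_apply, add_comm]

theorem cyc_apply (f : V →ₗ[K] V) (x : V) : cyc f (f x) = (cyc f x).map f := by
  simpa using cyc_pow_apply f x 1

theorem apply_mem_cyc {x y : V} (hy : y ∈ cyc f x) : f y ∈ cyc f x :=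
  cyc_le_iff (M := (cyc f x).comap f) |>.2 (fun i => by
    rw [mem_comap, ← Module.End.mul_apply, ← pow_succ']
    exact pow_apply_mem_cyc f x _) hy

theorem cyc_apply_le (f : V →ₗ[K] V) (x : V) : cyc f (f x) ≤ cyc f x :=
  cyc_le (fun _ => apply_mem_cyc) (apply_mem_cyc (mem_cyc_self f x))

theorem cyc_eq_span_singleton_sup (f : V →ₗ[K] V) (x : V) : cyc f x = K ∙ x ⊔ cyc f (f x) := by
  refine le_antisymm (cyc_le_iff.2 fun i => ?_) (sup_le ?_ ?_)
  · cases i with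
    | zero => exact mem_sup_left (by simp [mem_span_singleton_self])
    | succ i =>
      rw [← pow_apply_apply]
      exact mem_sup_right (pow_apply_mem_cyc f _ i)
  · exact (span_singleton_le_iff_mem _ _).2 (mem_cyc_self f x)
  · exact cyc_apply_le f x

theorem pow_apply_mem_cyc_of_mem {x y : V} (k : ℕ) (hy : y ∈ cyc f x) : (f ^ k) y ∈ cyc f x :=
  Module.End.pow_apply_mem_of_forall_mem k (fun _ => apply_mem_cyc) y hy

theorem pow_apply_mem_cyc_pow_apply {x y : V} (k : ℕ) (hy : y ∈ cyc f x) :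
    (f ^ k) y ∈ cyc f ((f ^ k) x) := by
  rw [cyc_pow_apply]
  exact mem_map_of_mem hy

theorem pow_apply_add_mem_cyc {x z : V} (hz : z ∈ cyc f (f x)) (a : ℕ) :
    (f ^ a) (x + z) ∈ cyc f ((f ^ a) x) :=
  pow_apply_mem_cyc_pow_apply a (add_mem (mem_cyc_self f x) (cyc_apply_le f x hz))

theorem pow_apply_mem_of_le {X : Submodule K V} (hX : ∀ x ∈ X, f x ∈ X) {x : V} {k l : ℕ}
    (h : (f ^ k) x ∈ X) (hkl : k ≤ l) : (f ^ l) x ∈ X := by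
  rw [← Nat.sub_add_cancel hkl, ← pow_apply_pow_apply]
  exact Module.End.pow_apply_mem_of_forall_mem _ hX _ h

theorem cyc_antitone (f : V →ₗ[K] V) (x : V) {k l : ℕ} (h : k ≤ l) :
    cyc f ((f ^ l) x) ≤ cyc f ((f ^ k) x) :=
  cyc_le (fun _ => apply_mem_cyc)
    (pow_apply_mem_of_le (fun _ => apply_mem_cyc) (mem_cyc_self f _) h)

theorem cyc_zero (f : V →ₗ[K] V) : cyc f 0 = ⊥ :=
  eq_bot_iff.2 (cyc_le_iff.2 fun i => by simp)

theorem pow_apply_eq_zero_of_mem_cyc {x y : V} {k : ℕ} (hx : (f ^ k) x = 0)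
    (hy : y ∈ cyc f x) : (f ^ k) y = 0 := by
  have h := pow_apply_mem_cyc_pow_apply k hy
  rwa [hx, cyc_zero, mem_bot] at h

theorem eq_zero_of_mem_cyc_apply {x : V} {m : ℕ} (hx : (f ^ m) x = 0) (h : x ∈ cyc f (f x)) :
    x = 0 := by
  have h1 : cyc f x = (cyc f x).map f := by
    rw [← cyc_apply]
    exact le_antisymm (cyc_le (fun _ => apply_mem_cyc) h) (cyc_apply_le f x)
  have hk : ∀ k, cyc f x = (cyc f x).map (f ^ k) := by
    intro k
    induction k with
    | zero => rw [pow_zero, Module.End.one_eq_id, map_id]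
    | succ k ih => rw [pow_succ, Module.End.mul_eq_comp, map_comp, ← h1, ← ih]
  have hm : x ∈ cyc f ((f ^ m) x) := by
    rw [cyc_pow_apply, ← hk]
    exact mem_cyc_self f x
  rwa [hx, cyc_zero, mem_bot] at hm

theorem pow_apply_eq_zero_of_pow_apply_add_eq_zero {w z : V} {m k : ℕ} (hw : (f ^ m) w = 0)
    (hz : z ∈ cyc f (f w)) (h : (f ^ k) (w + z) = 0) : (f ^ k) w = 0 := by
  refine eq_zero_of_mem_cyc_apply (m := m) (by rw [pow_apply_pow_apply, add_comm,
    ← pow_apply_pow_apply, hw, map_zero]) ?_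
  rw [map_add, add_eq_zero_iff_eq_neg] at h
  rw [apply_pow_apply, ← pow_apply_apply, cyc_pow_apply, h]
  exact neg_mem (mem_map_of_mem hz)

theorem linearIndependent_pow_apply {w : V} {m n : ℕ} (hm : (f ^ m) w = 0)
    (hn : ∀ k < n, (f ^ k) w ≠ 0) : LinearIndependent K fun i : Fin n => (f ^ (i : ℕ)) w := by
  induction n generalizing w with
  | zero => exact linearIndependent_empty_type
  | succ n ih =>
    have hcons : (fun i : Fin (n + 1) => (f ^ (i : ℕ)) w) =
        Fin.cons w fun i : Fin n => (f ^ (i : ℕ)) (f w) := by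
      funext i
      refine Fin.cases (by simp) (fun j => ?_) i
      simp [pow_apply_apply]
    rw [hcons, linearIndependent_finCons]
    refine ⟨ih (by rw [pow_apply_apply, ← apply_pow_apply, hm, map_zero])
      (fun k hk => by rw [pow_apply_apply]; exact hn _ (by omega)), fun hw => ?_⟩
    refine hn 0 n.succ_pos ?_
    simpa using eq_zero_of_mem_cyc_apply hm
      (span_le.2 (Set.range_subset_iff.2 fun i => pow_apply_mem_cyc f _ _) hw)

theorem cyc_le_span_range {w : V} {n : ℕ} (hw : (f ^ n) w = 0) :
    cyc f w ≤ span K (Set.range fun i : Fin n => (f ^ (i : ℕ)) w) := by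
  refine cyc_le_iff.2 fun i => ?_
  by_cases hi : i < n
  · exact subset_span ⟨⟨i, hi⟩, rfl⟩
  · rw [← Nat.sub_add_cancel (not_lt.1 hi), ← pow_apply_pow_apply, hw, map_zero]
    exact zero_mem _

theorem pow_expnt_apply (hf : IsNilpotent f) (x : V) : (f ^ expnt f x) x = 0 := by
  obtain ⟨n, hn⟩ := hf
  exact Nat.sInf_mem (s := {ℓ | (f ^ ℓ) x = 0}) ⟨n, by simp [hn]⟩

theorem expnt_le {x : V} {k : ℕ} (h : (f ^ k) x = 0) : expnt f x ≤ k :=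
  Nat.sInf_le h

theorem pow_apply_eq_zero_of_expnt_le (hf : IsNilpotent f) {x : V} {k : ℕ}
    (h : expnt f x ≤ k) : (f ^ k) x = 0 := by
  rw [← Nat.sub_add_cancel h, ← pow_apply_pow_apply, pow_expnt_apply hf, map_zero]

end Cyclic

theorem ZMod.two_eq_zero_or_one (c : ZMod 2) : c = 0 ∨ c = 1 := by
  revert c
  decide

section CyclicZModTwo

variable {V : Type*} [AddCommGroup V] [Module (ZMod 2) V] {f : V →ₗ[ZMod 2] V}

theorem exists_eq_pow_apply_add_of_mem_cyc {w p : V} {n : ℕ} (hw : (f ^ n) w = 0)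
    (hp : p ∈ cyc f w) : ∃ a, ∃ z ∈ cyc f (f w), p = (f ^ a) (w + z) := by
  induction n generalizing w p with
  | zero =>
    rw [pow_zero, Module.End.one_apply] at hw
    subst hw
    rw [cyc_zero, mem_bot] at hp
    exact ⟨0, 0, zero_mem _, by simp [hp]⟩
  | succ n ih =>
    rw [cyc_eq_span_singleton_sup, mem_sup] at hp
    obtain ⟨_, hy, p', hp', rfl⟩ := hp
    obtain ⟨c, rfl⟩ := mem_span_singleton.1 hy
    obtain rfl | rfl := ZMod.two_eq_zero_or_one c
    · obtain ⟨a, z, hz, rfl⟩ := ih (by rwa [pow_apply_apply]) hp'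
      rw [cyc_apply] at hz
      obtain ⟨z', hz', rfl⟩ := hz
      exact ⟨a + 1, z', hz', by rw [zero_smul, zero_add, ← map_add, pow_apply_apply]⟩
    · exact ⟨0, p', hp', by simp⟩

end CyclicZModTwo

section CharHull

variable {K V : Type*} [Field K] [AddCommGroup V] [Module K V] {f : V →ₗ[K] V}
  {α β : V ≃ₗ[K] V}

theorem commutes_refl (f : V →ₗ[K] V) : Commutes f (LinearEquiv.refl K V) :=
  fun _ => rfl

theorem Commutes.symm (hα : Commutes f α) : Commutes f α.symm := fun x =>
  α.injective (by rw [hα, α.apply_symm_apply, α.apply_symm_apply])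

theorem Commutes.trans (hα : Commutes f α) (hβ : Commutes f β) : Commutes f (α.trans β) :=
  fun x => by rw [LinearEquiv.trans_apply, LinearEquiv.trans_apply, hα, hβ]

theorem Commutes.pow_apply (hα : Commutes f α) (k : ℕ) (x : V) :
    α ((f ^ k) x) = (f ^ k) (α x) := by
  induction k with
  | zero => rfl
  | succ k ih => rw [← apply_pow_apply, hα, ih, apply_pow_apply]

theorem mem_charHull_self (f : V →ₗ[K] V) (x : V) : x ∈ charHull f {x} :=
  subset_span ⟨x, rfl, 0, LinearEquiv.refl K V, commutes_refl f, rfl⟩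

theorem charinv_charHull (f : V →ₗ[K] V) (B : Set V) : Charinv f (charHull f B) := by
  refine ⟨fun y hy => ?_, fun α hα y hy => ?_⟩
  · induction hy using span_induction with
    | mem y hy =>
      obtain ⟨b, hb, i, β, hβ, rfl⟩ := hy
      exact subset_span ⟨b, hb, i + 1, β, hβ, apply_pow_apply f i _⟩
    | zero => simp
    | add y z _ _ hy hz => rw [map_add]; exact add_mem hy hz
    | smul c y _ hy => rw [map_smul]; exact smul_mem _ c hy
  · induction hy using span_induction with
    | mem y hy =>
      obtain ⟨b, hb, i, β, hβ, rfl⟩ := hy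
      exact subset_span ⟨b, hb, i, β.trans α, hβ.trans hα, hα.pow_apply i _⟩
    | zero => simp
    | add y z _ _ hy hz => rw [map_add]; exact add_mem hy hz
    | smul c y _ hy => rw [map_smul]; exact smul_mem _ c hy

theorem charHull_le {X : Submodule K V} (hX : Charinv f X) {x : V} (hx : x ∈ X) :
    charHull f {x} ≤ X := by
  refine span_le.2 ?_
  rintro _ ⟨b, rfl, i, α, hα, rfl⟩
  exact Module.End.pow_apply_mem_of_forall_mem i hX.1 _ (hX.2 α hα b hx)

theorem Charinv.symm_apply_mem {X : Submodule K V} (hX : Charinv f X) (hα : Commutes f α)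
    {x : V} (hx : x ∈ X) : α.symm x ∈ X :=
  hX.2 α.symm hα.symm x hx

end CharHull

section TwoCyclic

variable {K V : Type*} [Field K] [AddCommGroup V] [Module K V] {f : V →ₗ[K] V} {u v : V}
  {R S : ℕ}

structure TwoCyclic (f : V →ₗ[K] V) (u v : V) (R S : ℕ) : Prop where
  isNilpotent : IsNilpotent f
  isCompl : IsCompl (cyc f u) (cyc f v)
  expnt_u : expnt f u = R
  expnt_v : expnt f v = S
  lt : R < S

def cycSum (f : V →ₗ[K] V) (u v : V) (a b : ℕ) : Submodule K V :=
  cyc f ((f ^ a) u) ⊔ cyc f ((f ^ b) v)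

theorem cycSum_mono {a a' b b' : ℕ} (ha : a ≤ a') (hb : b ≤ b') :
    cycSum f u v a' b' ≤ cycSum f u v a b :=
  sup_le_sup (cyc_antitone f u ha) (cyc_antitone f v hb)

theorem pow_apply_left_mem_cycSum {a k : ℕ} (b : ℕ) (h : a ≤ k) : (f ^ k) u ∈ cycSum f u v a b :=
  mem_sup_left (cyc_antitone f u h (mem_cyc_self f _))

theorem pow_apply_right_mem_cycSum {b k : ℕ} (a : ℕ) (h : b ≤ k) : (f ^ k) v ∈ cycSum f u v a b :=
  mem_sup_right (cyc_antitone f v h (mem_cyc_self f _))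

theorem apply_mem_cycSum {a b : ℕ} {x : V} (hx : x ∈ cycSum f u v a b) :
    f x ∈ cycSum f u v a b := by
  obtain ⟨p, hp, q, hq, rfl⟩ := mem_sup.1 hx
  rw [map_add]
  exact add_mem (mem_sup_left (apply_mem_cyc hp)) (mem_sup_right (apply_mem_cyc hq))

theorem pow_apply_mem_cycSum {a b : ℕ} {x : V} (k : ℕ) (hx : x ∈ cycSum f u v a b) :
    (f ^ k) x ∈ cycSum f u v (a + k) (b + k) := by
  obtain ⟨p, hp, q, hq, rfl⟩ := mem_sup.1 hx
  rw [map_add]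
  refine add_mem (mem_sup_left ?_) (mem_sup_right ?_)
  · rw [add_comm, ← pow_apply_pow_apply]
    exact pow_apply_mem_cyc_pow_apply k hp
  · rw [add_comm, ← pow_apply_pow_apply]
    exact pow_apply_mem_cyc_pow_apply k hq

theorem mem_cycSum_of_mem_cyc_apply_left {z : V} (hz : z ∈ cyc f (f u)) (b : ℕ) :
    z ∈ cycSum f u v 1 b :=
  mem_sup_left (by rwa [pow_one])

theorem mem_cycSum_of_mem_cyc_apply_right {z : V} (hz : z ∈ cyc f (f v)) (a : ℕ) :
    z ∈ cycSum f u v a 1 :=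
  mem_sup_right (by rwa [pow_one])

theorem pow_apply_add_mem_cycSum {z₁ z₂ : V} (hz₁ : z₁ ∈ cyc f (f u)) (hz₂ : z₂ ∈ cyc f (f v))
    (a b : ℕ) : (f ^ a) (u + z₁) + (f ^ b) (v + z₂) ∈ cycSum f u v a b :=
  add_mem (mem_sup_left (pow_apply_add_mem_cyc hz₁ a)) (mem_sup_right (pow_apply_add_mem_cyc hz₂ b))

theorem cycSum_eq_span_sup (a b : ℕ) :
    cycSum f u v a b = span K {(f ^ a) u, (f ^ b) v} ⊔ cycSum f u v (a + 1) (b + 1) := by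
  rw [cycSum, cycSum, cyc_eq_span_singleton_sup, cyc_eq_span_singleton_sup (x := (f ^ b) v),
    apply_pow_apply, apply_pow_apply, span_insert]
  ac_rfl

namespace TwoCyclic

variable (hV : TwoCyclic f u v R S)
include hV

theorem pow_apply_u_eq_zero {k : ℕ} (hk : R ≤ k) : (f ^ k) u = 0 :=
  pow_apply_eq_zero_of_expnt_le hV.isNilpotent (hV.expnt_u ▸ hk)

theorem pow_apply_v_eq_zero {k : ℕ} (hk : S ≤ k) : (f ^ k) v = 0 :=
  pow_apply_eq_zero_of_expnt_le hV.isNilpotent (hV.expnt_v ▸ hk)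

theorem le_of_pow_apply_u_eq_zero {k : ℕ} (h : (f ^ k) u = 0) : R ≤ k :=
  hV.expnt_u ▸ expnt_le h

theorem le_of_pow_apply_v_eq_zero {k : ℕ} (h : (f ^ k) v = 0) : S ≤ k :=
  hV.expnt_v ▸ expnt_le h

theorem cycSum_zero_zero : cycSum f u v 0 0 = ⊤ := by
  simpa [cycSum] using hV.isCompl.sup_eq_top

theorem pow_apply_eq_zero_of_mem_cycSum {a b k : ℕ} {x : V} (hx : x ∈ cycSum f u v a b)
    (ha : R ≤ a + k) (hb : S ≤ b + k) : (f ^ k) x = 0 := by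
  obtain ⟨p, hp, q, hq, rfl⟩ := mem_sup.1 hx
  rw [map_add, pow_apply_eq_zero_of_mem_cyc (by rw [pow_apply_pow_apply, add_comm,
      hV.pow_apply_u_eq_zero ha]) hp, pow_apply_eq_zero_of_mem_cyc (by rw [pow_apply_pow_apply,
      add_comm, hV.pow_apply_v_eq_zero hb]) hq, add_zero]

theorem pow_R_apply_mem_cyc_v (x : V) : (f ^ R) x ∈ cyc f v := by
  have h := pow_apply_mem_cycSum R (hV.cycSum_zero_zero ▸ mem_top : x ∈ cycSum f u v 0 0)
  rw [cycSum, zero_add, hV.pow_apply_u_eq_zero le_rfl, cyc_zero, bot_sup_eq] at h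
  exact cyc_antitone f v (Nat.zero_le R) (by simpa using h)

theorem pow_S_apply_eq_zero (x : V) : (f ^ S) x = 0 :=
  have := hV.lt
  hV.pow_apply_eq_zero_of_mem_cycSum (hV.cycSum_zero_zero ▸ mem_top) (by omega) (by omega)

theorem linearIndependent_pow_apply_u : LinearIndependent K fun i : Fin R => (f ^ (i : ℕ)) u :=
  linearIndependent_pow_apply (hV.pow_apply_u_eq_zero le_rfl)
    fun _ hk h => (hV.le_of_pow_apply_u_eq_zero h).not_gt hk

theorem linearIndependent_pow_apply_v : LinearIndependent K fun i : Fin S => (f ^ (i : ℕ)) v :=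
  linearIndependent_pow_apply (hV.pow_apply_v_eq_zero le_rfl)
    fun _ hk h => (hV.le_of_pow_apply_v_eq_zero h).not_gt hk

noncomputable def basis : Basis (Fin R ⊕ Fin S) K V :=
  Basis.mk (v := Sum.elim (fun i : Fin R => (f ^ (i : ℕ)) u) fun j : Fin S => (f ^ (j : ℕ)) v)
    (hV.linearIndependent_pow_apply_u.sum_type hV.linearIndependent_pow_apply_v
      (hV.isCompl.disjoint.mono
        (span_le.2 (Set.range_subset_iff.2 fun i => pow_apply_mem_cyc f u i))
        (span_le.2 (Set.range_subset_iff.2 fun i => pow_apply_mem_cyc f v i))))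
    (by
      rw [← hV.isCompl.sup_eq_top, Set.Sum.elim_range, span_union]
      exact sup_le_sup (cyc_le_span_range (hV.pow_apply_u_eq_zero le_rfl))
        (cyc_le_span_range (hV.pow_apply_v_eq_zero le_rfl)))

theorem basis_inl (i : Fin R) : hV.basis (Sum.inl i) = (f ^ (i : ℕ)) u := by
  simp [basis]

theorem basis_inr (j : Fin S) : hV.basis (Sum.inr j) = (f ^ (j : ℕ)) v := by
  simp [basis]

noncomputable def lift (t₁ t₂ : V) : V →ₗ[K] V :=
  hV.basis.constr K (Sum.elim (fun i : Fin R => (f ^ (i : ℕ)) t₁) fun j : Fin S => (f ^ (j : ℕ)) t₂)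

theorem lift_basis (t₁ t₂ : V) (p : Fin R ⊕ Fin S) : hV.lift t₁ t₂ (hV.basis p) =
    Sum.elim (fun i : Fin R => (f ^ (i : ℕ)) t₁) (fun j : Fin S => (f ^ (j : ℕ)) t₂) p :=
  hV.basis.constr_basis K _ p

theorem lift_pow_apply_u {t₁ : V} (t₂ : V) (ht₁ : (f ^ R) t₁ = 0) (k : ℕ) :
    hV.lift t₁ t₂ ((f ^ k) u) = (f ^ k) t₁ := by
  by_cases hk : k < R
  · simpa [basis_inl] using hV.lift_basis t₁ t₂ (Sum.inl ⟨k, hk⟩)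
  · rw [hV.pow_apply_u_eq_zero (not_lt.1 hk), map_zero, ← Nat.sub_add_cancel (not_lt.1 hk),
      ← pow_apply_pow_apply, ht₁, map_zero]

theorem lift_pow_apply_v (t₁ t₂ : V) (k : ℕ) : hV.lift t₁ t₂ ((f ^ k) v) = (f ^ k) t₂ := by
  by_cases hk : k < S
  · simpa [basis_inr] using hV.lift_basis t₁ t₂ (Sum.inr ⟨k, hk⟩)
  · rw [hV.pow_apply_v_eq_zero (not_lt.1 hk), map_zero, ← Nat.sub_add_cancel (not_lt.1 hk),
      ← pow_apply_pow_apply, hV.pow_S_apply_eq_zero, map_zero]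

theorem lift_apply_apply {t₁ : V} (t₂ : V) (ht₁ : (f ^ R) t₁ = 0) (x : V) :
    hV.lift t₁ t₂ (f x) = f (hV.lift t₁ t₂ x) := by
  refine LinearMap.congr_fun (hV.basis.ext (f₁ := hV.lift t₁ t₂ ∘ₗ f) (f₂ := f ∘ₗ hV.lift t₁ t₂)
    fun p => ?_) x
  rcases p with i | j
  · simp only [LinearMap.comp_apply, basis_inl, apply_pow_apply, hV.lift_pow_apply_u t₂ ht₁]
  · simp only [LinearMap.comp_apply, basis_inr, apply_pow_apply, hV.lift_pow_apply_v]

theorem lift_add (t₁ t₂ t₁' t₂' : V) :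
    hV.lift (t₁ + t₁') (t₂ + t₂') = hV.lift t₁ t₂ + hV.lift t₁' t₂' :=
  hV.basis.ext fun p => by
    rcases p with i | j <;> simp only [LinearMap.add_apply, lift_basis, Sum.elim_inl, Sum.elim_inr,
      map_add]

theorem lift_u_v : hV.lift u v = 1 :=
  hV.basis.ext fun p => by
    rcases p with i | j <;> rw [lift_basis] <;> simp [basis_inl, basis_inr]

theorem lift_mem_cycSum {z₁ z₂ x : V} {a b : ℕ} (hz₁ : z₁ ∈ cycSum f u v 1 1)
    (hz₂ : z₂ ∈ cycSum f u v 0 1) (hR : (f ^ R) z₁ = 0) (hx : x ∈ cycSum f u v a b) :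
    hV.lift z₁ z₂ x ∈ cycSum f u v (min (a + 1) b) (min (a + 1) (b + 1)) := by
  obtain ⟨p, hp, q, hq, rfl⟩ := mem_sup.1 hx
  rw [map_add]
  refine add_mem (mem_comap.1 (cyc_le_iff (M := comap _ _) |>.2 (fun i => ?_) hp))
    (mem_comap.1 (cyc_le_iff (M := comap _ _) |>.2 (fun i => ?_) hq))
  · rw [mem_comap, pow_apply_pow_apply, hV.lift_pow_apply_u z₂ hR]
    exact cycSum_mono (by omega) (by omega) (pow_apply_mem_cycSum _ hz₁)
  · rw [mem_comap, pow_apply_pow_apply, hV.lift_pow_apply_v]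
    exact cycSum_mono (by omega) (by omega) (pow_apply_mem_cycSum _ hz₂)

theorem isNilpotent_lift {z₁ z₂ : V} (hz₁ : z₁ ∈ cycSum f u v 1 1)
    (hz₂ : z₂ ∈ cycSum f u v 0 1) (hR : (f ^ R) z₁ = 0) : IsNilpotent (hV.lift z₁ z₂) := by
  have key : ∀ k x, (hV.lift z₁ z₂ ^ (2 * k)) x ∈ cycSum f u v k k := by
    intro k
    induction k with
    | zero => simp [hV.cycSum_zero_zero]
    | succ k ih =>
      intro x
      rw [show 2 * (k + 1) = 2 * k + 1 + 1 by ring, pow_succ', pow_succ', Module.End.mul_apply,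
        Module.End.mul_apply]
      have h := hV.lift_mem_cycSum hz₁ hz₂ hR (hV.lift_mem_cycSum hz₁ hz₂ hR (ih x))
      exact cycSum_mono (by omega) (by omega) h
  have := hV.lt
  refine ⟨2 * S, LinearMap.ext fun x => ?_⟩
  simpa using hV.pow_apply_eq_zero_of_mem_cycSum (k := 0) (key S x) (by omega) le_rfl

theorem isUnit_lift {z₁ z₂ : V} (hz₁ : z₁ ∈ cycSum f u v 1 (S - R))
    (hz₂ : z₂ ∈ cycSum f u v 0 1) : IsUnit (hV.lift (u + z₁) (v + z₂)) := by
  have := hV.lt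
  rw [hV.lift_add, lift_u_v]
  exact (hV.isNilpotent_lift (cycSum_mono le_rfl (by omega) hz₁) hz₂
    (hV.pow_apply_eq_zero_of_mem_cycSum hz₁ (by omega) (by omega))).isUnit_one_add

noncomputable def liftAut {z₁ z₂ : V} (hz₁ : z₁ ∈ cycSum f u v 1 (S - R))
    (hz₂ : z₂ ∈ cycSum f u v 0 1) : V ≃ₗ[K] V :=
  LinearEquiv.ofBijective _ ((Module.End.isUnit_iff _).1 (hV.isUnit_lift hz₁ hz₂))

theorem liftAut_apply {z₁ z₂ : V} (hz₁ : z₁ ∈ cycSum f u v 1 (S - R))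
    (hz₂ : z₂ ∈ cycSum f u v 0 1) (x : V) :
    hV.liftAut hz₁ hz₂ x = hV.lift (u + z₁) (v + z₂) x :=
  rfl

theorem pow_R_apply_u_add_eq_zero {z₁ : V} (hz₁ : z₁ ∈ cycSum f u v 1 (S - R)) :
    (f ^ R) (u + z₁) = 0 := by
  have := hV.lt
  rw [map_add, hV.pow_apply_u_eq_zero le_rfl, zero_add]
  exact hV.pow_apply_eq_zero_of_mem_cycSum hz₁ (by omega) (by omega)

theorem commutes_liftAut {z₁ z₂ : V} (hz₁ : z₁ ∈ cycSum f u v 1 (S - R))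
    (hz₂ : z₂ ∈ cycSum f u v 0 1) : Commutes f (hV.liftAut hz₁ hz₂) :=
  hV.lift_apply_apply _ (hV.pow_R_apply_u_add_eq_zero hz₁)

theorem liftAut_pow_apply_add {z₁ z₂ : V} (hz₁ : z₁ ∈ cycSum f u v 1 (S - R))
    (hz₂ : z₂ ∈ cycSum f u v 0 1) (a b : ℕ) :
    hV.liftAut hz₁ hz₂ ((f ^ a) u + (f ^ b) v) = (f ^ a) (u + z₁) + (f ^ b) (v + z₂) := by
  rw [map_add, liftAut_apply, liftAut_apply,
    hV.lift_pow_apply_u _ (hV.pow_R_apply_u_add_eq_zero hz₁),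
    hV.lift_pow_apply_v]

theorem pow_apply_add_mem_of_charinv {X : Submodule K V} (hX : Charinv f X) {a b : ℕ}
    (hy : (f ^ a) u + (f ^ b) v ∈ X) {z₁ z₂ : V} (hz₁ : z₁ ∈ cycSum f u v 1 (S - R))
    (hz₂ : z₂ ∈ cycSum f u v 0 1) : (f ^ a) z₁ + (f ^ b) z₂ ∈ X := by
  have h := sub_mem (hX.2 _ (hV.commutes_liftAut hz₁ hz₂) _ hy) hy
  rw [hV.liftAut_pow_apply_add, map_add, map_add] at h
  convert h using 1
  abel

/-- The part of `charHull f {f^a u + f^b v}` produced by the automorphisms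
`u ↦ u + f u`, `v ↦ v + u`, `u ↦ u + f^(S-R) v` and `v ↦ v + f v`. -/
theorem cycSum_min_le_of_charinv {X : Submodule K V} (hX : Charinv f X) {a b : ℕ}
    (hy : (f ^ a) u + (f ^ b) v ∈ X) :
    cycSum f u v (min (a + 1) b) (min (S - R + a) (b + 1)) ≤ X := by
  have h := fun {z₁ z₂ : V} => hV.pow_apply_add_mem_of_charinv hX hy (z₁ := z₁) (z₂ := z₂)
  have h₁ : (f ^ (a + 1)) u ∈ X := by
    have hfu := pow_apply_left_mem_cycSum (f := f) (u := u) (v := v) (k := 1) (S - R) le_rfl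
    rw [pow_one] at hfu
    simpa [pow_apply_apply] using h hfu (zero_mem _)
  have h₂ : (f ^ b) u ∈ X := by
    simpa using h (zero_mem _)
      (by simpa using pow_apply_left_mem_cycSum (f := f) (u := u) (v := v) (k := 0) 1 le_rfl)
  have h₃ : (f ^ (S - R + a)) v ∈ X := by
    simpa [pow_apply_pow_apply, add_comm] using h (pow_apply_right_mem_cycSum 1 le_rfl) (zero_mem _)
  have h₄ : (f ^ (b + 1)) v ∈ X := by
    have hfv := pow_apply_right_mem_cycSum (f := f) (u := u) (v := v) (k := 1) 0 le_rfl
    rw [pow_one] at hfv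
    simpa [pow_apply_apply] using h (zero_mem _) hfv
  refine sup_le (cyc_le hX.1 ?_) (cyc_le hX.1 ?_)
  · rcases min_choice (a + 1) b with h | h <;> rwa [h]
  · rcases min_choice (S - R + a) (b + 1) with h | h <;> rwa [h]

theorem lt_of_pow_apply_add_mem {X : Submodule K V} (hX : Charinv f X) {a b : ℕ}
    (hy : (f ^ a) u + (f ^ b) v ∈ X) (hu : (f ^ a) u ∉ X) :
    a < R ∧ a < b ∧ b + R < a + S ∧ cycSum f u v (a + 1) (b + 1) ≤ X := by
  have := hV.lt
  have hv : (f ^ b) v ∉ X := fun hv => hu (by simpa using sub_mem hy hv)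
  have hle := hV.cycSum_min_le_of_charinv hX hy
  have ha : a < R := by
    by_contra h
    exact hu (by rw [hV.pow_apply_u_eq_zero (not_lt.1 h)]; exact zero_mem _)
  have hab : a < b := by
    by_contra h
    exact hu (hle (pow_apply_left_mem_cycSum _ (by omega)))
  have hb : b + R < a + S := by
    by_contra h
    exact hv (hle (pow_apply_right_mem_cycSum _ (by omega)))
  exact ⟨ha, hab, hb, le_trans (cycSum_mono (by omega) (by omega)) hle⟩

theorem eq_zero_of_add_eq_zero {p q : V} (hp : p ∈ cyc f u) (hq : q ∈ cyc f v) (h : p + q = 0) :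
    p = 0 :=
  disjoint_def.1 hV.isCompl.disjoint p hp (by rw [eq_neg_of_add_eq_zero_left h]; exact neg_mem hq)

theorem pow_apply_v_notMem_span_sup {a b : ℕ} (ha : a < R) (hb : b < S) :
    (f ^ b) v ∉ span K {(f ^ a) u + (f ^ b) v} ⊔ cycSum f u v (a + 1) (b + 1) := by
  intro h
  obtain ⟨_, hy, _, hr, hsum⟩ := mem_sup.1 h
  obtain ⟨c, rfl⟩ := mem_span_singleton.1 hy
  obtain ⟨p, hp, q, hq, rfl⟩ := mem_sup.1 hr
  have hpu : p ∈ cyc f u := cyc_antitone f u (Nat.zero_le _) (by simpa using hp)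
  have hqv : q ∈ cyc f v := cyc_antitone f v (Nat.zero_le _) (by simpa using hq)
  have hP : c • (f ^ a) u + p = 0 := by
    refine hV.eq_zero_of_add_eq_zero (q := c • (f ^ b) v + q - (f ^ b) v)
      (add_mem (smul_mem _ c (pow_apply_mem_cyc f u a)) hpu)
      (sub_mem (add_mem (smul_mem _ c (pow_apply_mem_cyc f v b)) hqv) (pow_apply_mem_cyc f v b)) ?_
    rw [← sub_eq_zero.2 hsum, smul_add]
    abel
  rw [← apply_pow_apply] at hp hq
  by_cases hc : c = 0
  · subst hc
    rw [zero_smul, zero_add] at hP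
    rw [hP, zero_smul, zero_add, zero_add] at hsum
    rw [hsum] at hq
    exact hb.not_ge (hV.le_of_pow_apply_v_eq_zero
      (eq_zero_of_mem_cyc_apply (hV.pow_S_apply_eq_zero _) hq))
  · have hu : (f ^ a) u = -c⁻¹ • p := by
      rw [← inv_smul_smul₀ hc ((f ^ a) u), eq_neg_of_add_eq_zero_left hP, smul_neg, neg_smul]
    have hmem := smul_mem _ (-c⁻¹) hp
    rw [← hu] at hmem
    refine ha.not_ge (hV.le_of_pow_apply_u_eq_zero (eq_zero_of_mem_cyc_apply (m := R) ?_ hmem))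
    rw [pow_apply_pow_apply, hV.pow_apply_u_eq_zero (by omega)]

theorem le_add_of_pow_R_apply_eq_zero {a b : ℕ} {z₁ z₂ : V} (hz₁ : z₁ ∈ cyc f (f u))
    (hz₂ : z₂ ∈ cyc f (f v)) (h : (f ^ R) ((f ^ a) (u + z₁) + (f ^ b) (v + z₂)) = 0) :
    S ≤ R + b := by
  rw [map_add, pow_apply_eq_zero_of_mem_cyc (hV.pow_apply_u_eq_zero le_rfl)
    (pow_apply_mem_cyc_of_mem a (add_mem (mem_cyc_self f u) (cyc_apply_le f u hz₁))), zero_add,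
    pow_apply_pow_apply] at h
  exact hV.le_of_pow_apply_v_eq_zero
    (pow_apply_eq_zero_of_pow_apply_add_eq_zero (hV.pow_apply_v_eq_zero le_rfl) hz₂ h)

end TwoCyclic

end TwoCyclic

section TwoCyclicZModTwo

variable {V : Type*} [AddCommGroup V] [Module (ZMod 2) V] {f : V →ₗ[ZMod 2] V} {u v : V}
  {R S : ℕ} {X : Submodule (ZMod 2) V}

namespace TwoCyclic

variable (hV : TwoCyclic f u v R S)
include hV

theorem exists_eq_pow_apply_add (x : V) :
    ∃ a b, ∃ z₁ ∈ cyc f (f u), ∃ z₂ ∈ cyc f (f v), x = (f ^ a) (u + z₁) + (f ^ b) (v + z₂) := by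
  have hx : x ∈ cyc f u ⊔ cyc f v := hV.isCompl.sup_eq_top ▸ mem_top
  obtain ⟨p, hp, q, hq, rfl⟩ := mem_sup.1 hx
  obtain ⟨a, z₁, hz₁, rfl⟩ := exists_eq_pow_apply_add_of_mem_cyc (hV.pow_apply_u_eq_zero le_rfl) hp
  obtain ⟨b, z₂, hz₂, rfl⟩ := exists_eq_pow_apply_add_of_mem_cyc (hV.pow_apply_v_eq_zero le_rfl) hq
  exact ⟨a, b, z₁, hz₁, z₂, hz₂, rfl⟩

theorem mem_cycSum_of_pow_R_apply_eq_zero {x : V} (hx : (f ^ R) x = 0) :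
    x ∈ cycSum f u v 0 (S - R) := by
  obtain ⟨a, b, z₁, hz₁, z₂, hz₂, rfl⟩ := hV.exists_eq_pow_apply_add x
  have := hV.le_add_of_pow_R_apply_eq_zero hz₁ hz₂ hx
  exact cycSum_mono (Nat.zero_le a) (by omega) (pow_apply_add_mem_cycSum hz₁ hz₂ a b)

theorem sub_mem_of_commutes_u {α : V ≃ₗ[ZMod 2] V} (hα : Commutes f α) :
    α u - u ∈ cycSum f u v 1 (S - R) := by
  have := hV.lt
  rcases Nat.eq_zero_or_pos R with hR | hR
  · have hu : u = 0 := by simpa using hV.pow_apply_u_eq_zero (k := 0) hR.le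
    simp [hu]
  obtain ⟨a, b, z₁, hz₁, z₂, hz₂, hαu⟩ := hV.exists_eq_pow_apply_add (α u)
  have hb := hV.le_add_of_pow_R_apply_eq_zero hz₁ hz₂
    (by rw [← hαu, ← hα.pow_apply, hV.pow_apply_u_eq_zero le_rfl, map_zero])
  rcases Nat.eq_zero_or_pos a with rfl | ha
  · rw [hαu, pow_zero, Module.End.one_apply, add_sub_right_comm, add_sub_cancel_left]
    exact add_mem (mem_cycSum_of_mem_cyc_apply_left hz₁ _)
      (mem_sup_right (cyc_antitone f v (by omega) (pow_apply_add_mem_cyc hz₂ b)))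
  -- Otherwise `f^(R-1) u` would lie in `f^R V ⊆ ⟨v⟩`.
  have key : α ((f ^ (R - 1)) u) = (f ^ R) ((f ^ (a - 1)) (u + z₁) + (f ^ (b - 1)) (v + z₂)) := by
    rw [hα.pow_apply, hαu, map_add (f ^ (R - 1)), map_add (f ^ R), pow_apply_pow_apply,
      pow_apply_pow_apply, pow_apply_pow_apply, pow_apply_pow_apply,
      show R - 1 + a = R + (a - 1) by omega, show R - 1 + b = R + (b - 1) by omega]
  have hv : (f ^ (R - 1)) u ∈ cyc f v := by
    rw [← α.symm_apply_apply ((f ^ (R - 1)) u), key, hα.symm.pow_apply]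
    exact hV.pow_R_apply_mem_cyc_v _
  have hu := hV.eq_zero_of_add_eq_zero (pow_apply_mem_cyc f u _) (neg_mem hv) (add_neg_cancel _)
  exact absurd (hV.le_of_pow_apply_u_eq_zero hu) (by omega)

theorem sub_mem_of_commutes_v {α : V ≃ₗ[ZMod 2] V} (hα : Commutes f α) :
    α v - v ∈ cycSum f u v 0 1 := by
  have := hV.lt
  obtain ⟨a, b, z₁, hz₁, z₂, hz₂, hαv⟩ := hV.exists_eq_pow_apply_add (α v)
  rcases Nat.eq_zero_or_pos b with rfl | hb
  · rw [hαv, pow_zero, Module.End.one_apply, add_sub_assoc, add_sub_cancel_left]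
    exact add_mem (mem_sup_left (cyc_antitone f u (Nat.zero_le a) (pow_apply_add_mem_cyc hz₁ a)))
      (mem_cycSum_of_mem_cyc_apply_right hz₂ 0)
  have h : α ((f ^ (S - 1)) v) = 0 := by
    rw [hα.pow_apply, hαv]
    exact hV.pow_apply_eq_zero_of_mem_cycSum (pow_apply_add_mem_cycSum hz₁ hz₂ a b) (by omega)
      (by omega)
  exact absurd (hV.le_of_pow_apply_v_eq_zero (α.map_eq_zero_iff.1 h)) (by omega)

theorem charHull_le_span_sup {a b : ℕ} (hab : a < b) (hb : b + R < a + S) :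
    charHull f {(f ^ a) u + (f ^ b) v} ≤
      span (ZMod 2) {(f ^ a) u + (f ^ b) v} ⊔ cycSum f u v (a + 1) (b + 1) := by
  have := hV.lt
  set y := (f ^ a) u + (f ^ b) v
  have hfy : f y ∈ cycSum f u v (a + 1) (b + 1) := by
    rw [map_add, apply_pow_apply, apply_pow_apply]
    exact add_mem (pow_apply_left_mem_cycSum _ le_rfl) (pow_apply_right_mem_cycSum _ le_rfl)
  have hf : ∀ x ∈ span (ZMod 2) {y} ⊔ cycSum f u v (a + 1) (b + 1),
      f x ∈ span (ZMod 2) {y} ⊔ cycSum f u v (a + 1) (b + 1) := by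
    intro x hx
    obtain ⟨_, hs, r, hr, rfl⟩ := mem_sup.1 hx
    obtain ⟨c, rfl⟩ := mem_span_singleton.1 hs
    rw [map_add, map_smul]
    exact mem_sup_right (add_mem (smul_mem _ c hfy) (apply_mem_cycSum hr))
  refine span_le.2 ?_
  rintro _ ⟨_, rfl, i, α, hα, rfl⟩
  refine Module.End.pow_apply_mem_of_forall_mem i hf _ ?_
  have hαy : α y = y + ((f ^ a) (α u - u) + (f ^ b) (α v - v)) := by
    simp only [y, map_add, hα.pow_apply, map_sub]
    abel
  rw [hαy]
  refine add_mem (mem_sup_left (mem_span_singleton_self y)) (mem_sup_right (add_mem ?_ ?_))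
  · exact cycSum_mono (by omega) (by omega) (pow_apply_mem_cycSum a (hV.sub_mem_of_commutes_u hα))
  · exact cycSum_mono (by omega) (by omega) (pow_apply_mem_cycSum b (hV.sub_mem_of_commutes_v hα))

theorem not_hyperinv_charHull {a b : ℕ} (ha : a < R) (hab : a < b) (hb : b + R < a + S) :
    ¬ Hyperinv f (charHull f {(f ^ a) u + (f ^ b) v}) := by
  intro hH
  have h := hH (hV.lift 0 v) (hV.lift_apply_apply v (by simp)) _ (mem_charHull_self f _)
  rw [map_add, hV.lift_pow_apply_u v (by simp), hV.lift_pow_apply_v, map_zero, zero_add] at h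
  exact hV.pow_apply_v_notMem_span_sup ha (by omega) (hV.charHull_le_span_sup hab hb h)

theorem hyperinv_cycSum {c d : ℕ} (hcd : c ≤ d) (hdc : d ≤ S - R + c) :
    Hyperinv f (cycSum f u v c d) := by
  intro g hg x hx
  have hgf : ∀ k y, g ((f ^ k) y) = (f ^ k) (g y) := fun k y =>
    LinearMap.congr_fun ((Commute.pow_right (LinearMap.ext hg : Commute g f) k).eq) y
  obtain ⟨p, hp, q, hq, rfl⟩ := mem_sup.1 hx
  rw [map_add]
  refine add_mem (mem_comap.1 (cyc_le_iff (M := comap g _) |>.2 (fun i => ?_) hp))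
    (mem_comap.1 (cyc_le_iff (M := comap g _) |>.2 (fun i => ?_) hq))
  · have hgu : g u ∈ cycSum f u v 0 (S - R) :=
      hV.mem_cycSum_of_pow_R_apply_eq_zero (by rw [← hgf, hV.pow_apply_u_eq_zero le_rfl, map_zero])
    rw [mem_comap, pow_apply_pow_apply, hgf]
    exact cycSum_mono (by omega) (by omega) (pow_apply_mem_cycSum (i + c) hgu)
  · have hgv : g v ∈ cycSum f u v 0 0 := hV.cycSum_zero_zero ▸ mem_top
    rw [mem_comap, pow_apply_pow_apply, hgf]
    exact cycSum_mono (by omega) (by omega) (pow_apply_mem_cycSum (i + d) hgv)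

theorem exists_pow_apply_add_mem_of_charinv (hX : Charinv f X) {x : V} (hx : x ∈ X) :
    ∃ a b, x ∈ cycSum f u v a b ∧ (f ^ a) u + (f ^ b) v ∈ X := by
  obtain ⟨a, b, z₁, hz₁, z₂, hz₂, rfl⟩ := hV.exists_eq_pow_apply_add x
  have hz₁' := mem_cycSum_of_mem_cyc_apply_left (v := v) hz₁ (S - R)
  have hz₂' := mem_cycSum_of_mem_cyc_apply_right (u := u) hz₂ 0
  refine ⟨a, b, pow_apply_add_mem_cycSum hz₁ hz₂ a b, ?_⟩
  have h := hX.symm_apply_mem (hV.commutes_liftAut hz₁' hz₂') hx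
  rwa [← hV.liftAut_pow_apply_add hz₁' hz₂', LinearEquiv.symm_apply_apply] at h

theorem eq_charHull_of_charinv (hX : Charinv f X) {a b : ℕ} (hle : X ≤ cycSum f u v a b)
    (hy : (f ^ a) u + (f ^ b) v ∈ X) (hu : (f ^ a) u ∉ X) (hv : (f ^ b) v ∉ X) :
    X = charHull f {(f ^ a) u + (f ^ b) v} := by
  refine le_antisymm (fun x hx => ?_) (charHull_le hX hy)
  have hsub : cycSum f u v (a + 1) (b + 1) ≤ charHull f {(f ^ a) u + (f ^ b) v} :=
    le_trans (cycSum_mono (by omega) (by omega))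
      (hV.cycSum_min_le_of_charinv (charinv_charHull f _) (mem_charHull_self f _))
  have hXsub := le_trans hsub (charHull_le hX hy)
  have hx' := hle hx
  rw [cycSum_eq_span_sup] at hx'
  obtain ⟨_, hs, r, hr, rfl⟩ := mem_sup.1 hx'
  obtain ⟨c, d, rfl⟩ := mem_span_pair.1 hs
  have hcd : c • (f ^ a) u + d • (f ^ b) v ∈ X := by simpa using sub_mem hx (hXsub hr)
  rcases ZMod.two_eq_zero_or_one c with rfl | rfl <;>
    rcases ZMod.two_eq_zero_or_one d with rfl | rfl
  · simpa using hsub hr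
  · exact absurd (by simpa using hcd) hv
  · exact absurd (by simpa using hcd) hu
  · simpa using add_mem (mem_charHull_self f _) (hsub hr)

theorem hyperinv_of_pow_apply_mem (hX : Charinv f X) {c d : ℕ} (hle : X ≤ cycSum f u v c d)
    (hmin : ∀ a b, (f ^ a) u + (f ^ b) v ∈ X → c ≤ a ∧ d ≤ b) (hu : (f ^ c) u ∈ X)
    (hv : (f ^ d) v ∈ X) : Hyperinv f X := by
  have hpu : ∀ {a}, (f ^ a) u ∈ X → (f ^ a) u + (f ^ S) v ∈ X := fun h => by
    rwa [hV.pow_apply_v_eq_zero le_rfl, add_zero]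
  have hpv : ∀ {b}, (f ^ b) v ∈ X → (f ^ R) u + (f ^ b) v ∈ X := fun h => by
    rwa [hV.pow_apply_u_eq_zero le_rfl, zero_add]
  have hXeq : X = cycSum f u v c d := le_antisymm hle (sup_le (cyc_le hX.1 hu) (cyc_le hX.1 hv))
  refine hXeq ▸ hV.hyperinv_cycSum (hmin d S (hpu ?_)).1 (hmin R _ (hpv ?_)).2
  · exact hV.cycSum_min_le_of_charinv hX (hpv hv) (pow_apply_left_mem_cycSum _ (min_le_right _ _))
  · exact hV.cycSum_min_le_of_charinv hX (hpu hu) (pow_apply_right_mem_cycSum _ (min_le_left _ _))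

theorem exists_eq_charHull_of_not_hyperinv (hX : Charinv f X) (hH : ¬ Hyperinv f X) :
    ∃ a b, a < R ∧ a < b ∧ b + R < a + S ∧ X = charHull f {(f ^ a) u + (f ^ b) v} := by
  have h0 : (f ^ R) u + (f ^ S) v ∈ X := by
    rw [hV.pow_apply_u_eq_zero le_rfl, hV.pow_apply_v_eq_zero le_rfl, add_zero]
    exact zero_mem X
  obtain ⟨dU, ⟨b₁, h₁⟩, hdU⟩ : ∃ a, (∃ b, (f ^ a) u + (f ^ b) v ∈ X) ∧
      ∀ a' b', (f ^ a') u + (f ^ b') v ∈ X → a ≤ a' :=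
    ⟨_, Nat.sInf_mem (s := {a | ∃ b, (f ^ a) u + (f ^ b) v ∈ X}) ⟨R, S, h0⟩,
      fun a' b' h => Nat.sInf_le ⟨b', h⟩⟩
  obtain ⟨dW, ⟨a₂, h₂⟩, hdW⟩ : ∃ b, (∃ a, (f ^ a) u + (f ^ b) v ∈ X) ∧
      ∀ a' b', (f ^ a') u + (f ^ b') v ∈ X → b ≤ b' :=
    ⟨_, Nat.sInf_mem (s := {b | ∃ a, (f ^ a) u + (f ^ b) v ∈ X}) ⟨S, R, h0⟩,
      fun a' b' h => Nat.sInf_le ⟨a', h⟩⟩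
  have hle : X ≤ cycSum f u v dU dW := fun x hx => by
    obtain ⟨a, b, hx', hab⟩ := hV.exists_pow_apply_add_mem_of_charinv hX hx
    exact cycSum_mono (hdU a b hab) (hdW a b hab) hx'
  have hmin : ∀ a b, (f ^ a) u + (f ^ b) v ∈ X → dU ≤ a ∧ dW ≤ b :=
    fun a b h => ⟨hdU a b h, hdW a b h⟩
  have hu : (f ^ dU) u ∉ X := fun hu => hH <| hV.hyperinv_of_pow_apply_mem hX hle hmin hu
    (by simpa using sub_mem h₂ (pow_apply_mem_of_le hX.1 hu (hdU a₂ dW h₂)))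
  have hv : (f ^ dW) v ∉ X := fun hv =>
    hu (by simpa using sub_mem h₁ (pow_apply_mem_of_le hX.1 hv (hdW dU b₁ h₁)))
  obtain ⟨-, -, -, hU⟩ := hV.lt_of_pow_apply_add_mem hX h₁ hu
  obtain rfl : a₂ = dU := by
    refine le_antisymm ?_ (hdU a₂ dW h₂)
    by_contra h
    exact hv (by simpa using sub_mem h₂ (hU (pow_apply_left_mem_cycSum (k := a₂) _ (by omega))))
  obtain ⟨ha, hab, hb, -⟩ := hV.lt_of_pow_apply_add_mem hX h₂ hu
  exact ⟨a₂, dW, ha, hab, hb, hV.eq_charHull_of_charinv hX hle h₂ hu hv⟩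

end TwoCyclic

end TwoCyclicZModTwo

theorem stmt2_general (V : Type*) [AddCommGroup V] [Module (ZMod 2) V]
    (f : V →ₗ[ZMod 2] V) (hf : IsNilpotent f)
    (u v : V) (R S : ℕ) (hcompl : IsCompl (cyc f u) (cyc f v))
    (heu : expnt f u = R) (hev : expnt f v = S) (hRS : R + 1 < S)
    (X : Submodule (ZMod 2) V) :
    (Charinv f X ∧ ¬ Hyperinv f X) ↔
      ∃ s q : ℕ, 0 < s ∧ s ≤ R ∧ s < q ∧ (R : ℤ) - s < (S : ℤ) - q ∧
        X = charHull f {(f ^ (R - s)) u + (f ^ (S - q)) v} := by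
  have hV : TwoCyclic f u v R S := ⟨hf, hcompl, heu, hev, by omega⟩
  constructor
  · rintro ⟨hX, hH⟩
    obtain ⟨a, b, ha, hab, hb, rfl⟩ := hV.exists_eq_charHull_of_not_hyperinv hX hH
    refine ⟨R - a, S - b, by omega, by omega, by omega, by omega, ?_⟩
    rw [Nat.sub_sub_self ha.le, Nat.sub_sub_self (by omega)]
  · rintro ⟨s, q, hs, hsR, hsq, hqS, rfl⟩
    exact ⟨charinv_charHull f _, hV.not_hyperinv_charHull (by omega) (by omega) (by omega)⟩

theorem stmt2 (V : Type*) [AddCommGroup V] [Module (ZMod 2) V]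
    [FiniteDimensional (ZMod 2) V] (f : V →ₗ[ZMod 2] V) (hf : IsNilpotent f)
    (u v : V) (R S : ℕ) (hcompl : IsCompl (cyc f u) (cyc f v))
    (heu : expnt f u = R) (hev : expnt f v = S) (hRS : R + 1 < S)
    (X : Submodule (ZMod 2) V) (hXinv : ∀ x ∈ X, f x ∈ X) :
    (Charinv f X ∧ ¬ Hyperinv f X) ↔
      ∃ s q : ℕ, 0 < s ∧ s ≤ R ∧ s < q ∧ (R : ℤ) - s < (S : ℤ) - q ∧
        X = charHull f {(f ^ (R - s)) u + (f ^ (S - q)) v} :=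
  stmt2_general V f hf u v R S hcompl heu hev hRS X
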